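/- arXiv:0804.4666 — 5 statements merged into one kernel-verified Lean document; each statement's English description precedes it below -/
import Mathlib

section
/- Let G = (A, B, E) be a bipartite simple graph with |A| = n, left degree d, which is a (k,ε)-unbalanced expander: every set X ⊆ A with |X| ≤ k satisfies |N(X)| ≥ (1−ε)·d·|X|. Order the edges lexicographically, and say an edge e_t = (i_t, j_t) causes a collision if some earlier edge e_s = (i_s, j_s), s < t, has j_s = j_t; let E″ be the set of edges causing collisions. Then for any k-sparse vector x ∈ ℝ^n (with coordinates ordered so that |x_1| ≥ … ≥ |x_n|), Σ_{(i,j)∈E″} |x_i| ≤ ε·d·‖x‖₁. -/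
open scoped Classical

/-!
Process the left vertices in order. Every right vertex `j ∈ N(X)` of a prefix `X` is hit by
exactly one non-colliding edge from `X` (the one from the least neighbour of `j`), so the `d·|X|`
edges leaving `X` contain at most `d·|X| - |N(X)| ≤ ε·d·|X|` collisions. Since `|x_i|` is
non-increasing, Abel summation turns these prefix bounds into the weighted bound; only prefixes
ending inside the support of `x` matter, and those have size at most `k`.
-/

open Finset

theorem mul_sum_range_le_sum_range_mul {a w : ℕ → ℝ} (ha : Antitone a) (ha0 : ∀ i, 0 ≤ a i)
    (hw : ∀ r, 0 < a r → 0 ≤ ∑ i ∈ Iic r, w i) (N : ℕ) :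
    a N * ∑ i ∈ range N, w i ≤ ∑ i ∈ range N, w i * a i := by
  induction N with
  | zero => simp
  | succ N ih =>
    have hstep : a (N + 1) * ∑ i ∈ range (N + 1), w i ≤ a N * ∑ i ∈ range (N + 1), w i := by
      by_cases hpos : 0 < a N
      · rw [Nat.range_succ_eq_Iic]
        exact mul_le_mul_of_nonneg_right (ha N.le_succ) (hw N hpos)
      · have hN : a N = 0 := le_antisymm (not_lt.mp hpos) (ha0 N)
        have hN1 : a (N + 1) = 0 := le_antisymm (hN ▸ ha N.le_succ) (ha0 _)
        rw [hN, hN1]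
    simp only [sum_range_succ] at hstep ⊢
    linarith

theorem Fin.sum_mul_le_of_antitone {n : ℕ} {a w : Fin n → ℝ} {c : ℝ} (ha : Antitone a)
    (ha0 : ∀ i, 0 ≤ a i) (hw : ∀ i, 0 < a i → ∑ j ∈ Iic i, w j ≤ c * (i + 1)) :
    ∑ i, w i * a i ≤ c * ∑ i, a i := by
  set a' : ℕ → ℝ := fun p => if h : p < n then a ⟨p, h⟩ else 0
  set w' : ℕ → ℝ := fun p => if h : p < n then c - w ⟨p, h⟩ else 0
  have ha'_coe (i : Fin n) : a' i = a i := dif_pos i.isLt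
  have hw'_coe (i : Fin n) : w' i = c - w i := dif_pos i.isLt
  have ha'0 (p : ℕ) : 0 ≤ a' p := by
    unfold a'; split_ifs
    exacts [ha0 _, le_rfl]
  have ha' : Antitone a' := by
    intro p q hpq
    by_cases hq : q < n
    · rw [show a' q = a ⟨q, hq⟩ from dif_pos hq, show a' p = a ⟨p, by omega⟩ from dif_pos _]
      exact ha hpq
    · rw [show a' q = 0 from dif_neg hq]
      exact ha'0 p
  have hw' (r : ℕ) (hr : 0 < a' r) : 0 ≤ ∑ p ∈ Iic r, w' p := by
    have hrn : r < n := by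
      by_contra h
      simp [a', h] at hr
    set i : Fin n := ⟨r, hrn⟩
    have hsum : ∑ p ∈ Iic r, w' p = c * (i + 1) - ∑ j ∈ Iic i, w j := by
      rw [show r = (i : ℕ) from rfl, ← Fin.map_valEmbedding_Iic, sum_map]
      simp only [Fin.valEmbedding_apply, hw'_coe]
      rw [sum_sub_distrib, Finset.sum_const, Fin.card_Iic, nsmul_eq_mul]
      push_cast
      ring
    rw [hsum, sub_nonneg]
    exact hw i (ha'_coe i ▸ hr)
  have key := mul_sum_range_le_sum_range_mul ha' ha'0 hw' n
  rw [show a' n = 0 from dif_neg (lt_irrefl n), zero_mul,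
    ← Fin.sum_univ_eq_sum_range (fun p => w' p * a' p)] at key
  simp only [ha'_coe, hw'_coe, sub_mul, sum_sub_distrib, ← mul_sum] at key
  linarith

theorem Finset.Iic_subset_filter_ne_zero {α : Type*} [Preorder α] [LocallyFiniteOrderBot α]
    [Fintype α] {x : α → ℝ} (hx : Antitone fun i => |x i|) {i : α} (hi : x i ≠ 0) :
    Iic i ⊆ univ.filter fun j => x j ≠ 0 := by
  intro j hj
  simp only [mem_filter, mem_univ, true_and]
  intro hj0
  have : |x i| ≤ |x j| := hx (mem_Iic.1 hj)
  rw [hj0, abs_zero] at this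
  exact hi (abs_nonpos_iff.mp this)

theorem Finset.card_filter_fst_mem {α β : Type*} [DecidableEq α] (S : Finset (α × β))
    (X : Finset α) : #(S.filter (·.1 ∈ X)) = ∑ i ∈ X, #(S.filter (·.1 = i)) := by
  rw [card_eq_sum_card_fiberwise (f := Prod.fst) (s := S.filter (·.1 ∈ X)) (t := X)
    fun e he => (mem_filter.1 he).2]
  refine sum_congr rfl fun i hi => congrArg card ?_
  rw [filter_filter]
  exact filter_congr fun e _ => ⟨fun h => h.2, fun h => ⟨h ▸ hi, h⟩⟩

section Collisions

variable {α β : Type*} [LinearOrder α] [DecidableEq β]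

/-- `E″` of the paper: in the lexicographic order, the earlier edges sharing the right endpoint of
`(i, j)` are exactly the edges `(i', j)` with `i' < i`. -/
noncomputable def collisionEdges (E : Finset (α × β)) : Finset (α × β) :=
  E.filter fun e => ∃ i, i < e.1 ∧ (i, e.2) ∈ E

theorem card_collisionEdges_filter_add_card_image (E : Finset (α × β)) {X : Finset α}
    (hX : IsLowerSet (X : Set α)) :
    #((collisionEdges E).filter (·.1 ∈ X)) + #((E.filter (·.1 ∈ X)).image Prod.snd) =
      #(E.filter (·.1 ∈ X)) := by
  set F := E.filter (·.1 ∈ X)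
  set first := F.filter fun e => ¬∃ i, i < e.1 ∧ (i, e.2) ∈ E
  have hfilter : (collisionEdges E).filter (·.1 ∈ X) =
      F.filter fun e => ∃ i, i < e.1 ∧ (i, e.2) ∈ E := filter_comm _ _ _
  have hinj : Set.InjOn Prod.snd (first : Set (α × β)) := by
    intro e he e' he' hj
    simp only [first, F, mem_coe, mem_filter, not_exists, not_and] at he he'
    rcases lt_trichotomy e.1 e'.1 with h | h | h
    · exact absurd (hj ▸ he.1.1 : (e.1, e'.2) ∈ E) (he'.2 e.1 h)
    · exact Prod.ext h hj
    · exact absurd (hj ▸ he'.1.1 : (e'.1, e.2) ∈ E) (he.2 e'.1 h)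
  -- each neighbour `j` is reached by a non-colliding edge: the one from its least neighbour
  have himage : first.image Prod.snd = F.image Prod.snd := by
    refine (image_subset_image (filter_subset _ _)).antisymm fun j hj => ?_
    obtain ⟨e, he, rfl⟩ := mem_image.1 hj
    have heF := mem_filter.1 he
    obtain ⟨e₀, he₀, hmin⟩ :=
      (E.filter (·.2 = e.2)).exists_min_image Prod.fst ⟨e, mem_filter.2 ⟨heF.1, rfl⟩⟩
    obtain ⟨he₀E, he₀j⟩ := mem_filter.1 he₀
    have he₀X : e₀.1 ∈ X := hX (hmin e (mem_filter.2 ⟨heF.1, rfl⟩)) heF.2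
    refine mem_image.2 ⟨e₀, mem_filter.2 ⟨mem_filter.2 ⟨he₀E, he₀X⟩, ?_⟩, he₀j⟩
    rintro ⟨i, hi, hiE⟩
    exact (hmin _ (mem_filter.2 ⟨hiE, he₀j⟩)).not_gt hi
  rw [hfilter, ← himage, card_image_of_injOn hinj, card_filter_add_card_filter_not]

theorem card_collisionEdges_filter_le {E : Finset (α × β)} {X : Finset α}
    (hX : IsLowerSet (X : Set α)) {d : ℕ} (hdeg : ∀ i ∈ X, #(E.filter (·.1 = i)) = d) {ε : ℝ}
    (hexp : (1 - ε) * d * #X ≤ #((E.filter (·.1 ∈ X)).image Prod.snd)) :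
    (#((collisionEdges E).filter (·.1 ∈ X)) : ℝ) ≤ ε * d * #X := by
  have hsplit := card_collisionEdges_filter_add_card_image E hX
  rw [card_filter_fst_mem E X, sum_congr rfl hdeg, sum_const, smul_eq_mul] at hsplit
  have hsplitR : (#((collisionEdges E).filter (·.1 ∈ X)) : ℝ) +
      #((E.filter (·.1 ∈ X)).image Prod.snd) = #X * d := by exact_mod_cast hsplit
  linarith

end Collisions

/-- For a `(k,ε)`-unbalanced expander with left degree `d` and a `k`-sparse vector `x` whose
coordinates are sorted by decreasing magnitude, the sum of `|x_i|` over edges `(i,j)` that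
cause collisions (an earlier edge in lexicographic order shares the right endpoint `j`)
is at most `ε·d·‖x‖₁`. -/
theorem stmt3 (n m k d : ℕ) (ε : ℝ)
    (E : Finset (Fin n × Fin m))
    (hdeg : ∀ i : Fin n, (E.filter fun e => e.1 = i).card = d)
    (hexp : ∀ X : Finset (Fin n), X.card ≤ k →
      (1 - ε) * d * X.card ≤ (((E.filter fun e => e.1 ∈ X).image Prod.snd).card : ℝ))
    (x : Fin n → ℝ)
    (hsparse : (Finset.univ.filter fun i => x i ≠ 0).card ≤ k)
    (hsorted : ∀ i j : Fin n, i ≤ j → |x j| ≤ |x i|) :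
    ∑ e ∈ E.filter (fun e => ∃ i' : Fin n, i' < e.1 ∧ (i', e.2) ∈ E), |x e.1|
      ≤ ε * d * ∑ i, |x i| := by
  rw [show E.filter (fun e => ∃ i' : Fin n, i' < e.1 ∧ (i', e.2) ∈ E) = collisionEdges E by
    unfold collisionEdges; congr]
  rw [← sum_fiberwise' (collisionEdges E) Prod.fst fun i => |x i|]
  simp only [sum_const, nsmul_eq_mul]
  refine Fin.sum_mul_le_of_antitone hsorted (fun _ => abs_nonneg _) fun i hi => ?_
  have hk : #(Iic i) ≤ k :=
    (card_le_card (Iic_subset_filter_ne_zero hsorted (abs_pos.mp hi))).trans hsparse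
  have hbound := card_collisionEdges_filter_le (coe_Iic i ▸ isLowerSet_Iic i)
    (fun j _ => hdeg j) (hexp _ hk)
  rw [card_filter_fst_mem, Fin.card_Iic] at hbound
  exact_mod_cast hbound
end

section
/- Let Φ be an m×n binary (0–1) matrix in which each column has exactly d ones. Suppose for some scaling factor S > 0 the matrix S·Φ satisfies the RIP(1,s,δ) property. Then Φ is the adjacency matrix of an (s,ε)-unbalanced expander with ε = (1 − 1/(1+δ))/(2−√2). -/
open scoped Classical

/-!
Testing RIP on a standard basis vector shows that every column of `S • Φ` has `ℓ¹`-norm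
`|S| d ≤ 1 + δ`. Testing the lower RIP bound on the `±1` vectors supported on `X` and averaging
over all sign patterns, Khintchine's inequality `𝔼 |∑ i ∈ A, εᵢ| ≤ √#A` (Cauchy–Schwarz on the
exact second moment) yields one sign pattern with `#X ≤ |S| ∑ⱼ √cⱼ`, where `cⱼ` is the number of
neighbours of the row `j` in `X`. As `√c` lies below the chord of `√` through `1` and `2`,
`∑ⱼ √cⱼ ≤ d #X - (2 - √2) (d #X - #N(X))`, and the two bounds combine to the expansion
inequality.
-/

open Finset

/-- `√` is concave, so on `ℕ` it lies below its chord through `(1, 1)` and `(2, √2)`. -/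
theorem sqrt_natCast_le_chord (c : ℕ) : √(c : ℝ) ≤ c - (2 - √2) * (c - 1) := by
  rcases c.eq_zero_or_pos with rfl | hc
  · simp
  set y := √(c : ℝ) with hy
  have hy2 : (c : ℝ) = y ^ 2 := (Real.sq_sqrt (Nat.cast_nonneg c)).symm
  have h1 : 1 ≤ √2 := Real.one_le_sqrt.mpr (by norm_num)
  have h2 : √2 ^ 2 = 2 := Real.sq_sqrt (by norm_num)
  have hfactor : 0 ≤ (y - 1) * (y - √2) := by
    rcases Nat.lt_or_ge c 2 with hc2 | hc2
    · have : c = 1 := by omega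
      simp [hy, this]
    · have : √2 ≤ y := Real.sqrt_le_sqrt (by exact_mod_cast hc2)
      exact mul_nonneg (by linarith) (by linarith)
  -- the gap is `(√2 - 1) (y - 1) (y - √2)`
  nlinarith [mul_nonneg (sub_nonneg.mpr h1) hfactor]

theorem sum_sqrt_natCast_le {κ : Type*} (s : Finset κ) (c : κ → ℕ) :
    ∑ j ∈ s, √(c j : ℝ) ≤
      ∑ j ∈ s, (c j : ℝ) - (2 - √2) * (∑ j ∈ s, (c j : ℝ) - #{j ∈ s | c j ≠ 0}) := by
  rw [← sum_filter_of_ne (p := fun j => c j ≠ 0) fun j _ h => by simpa using h,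
    ← sum_filter_of_ne (p := fun j => c j ≠ 0) (f := fun j => (c j : ℝ))
      fun j _ h => by simpa using h]
  calc ∑ j ∈ s with c j ≠ 0, √(c j : ℝ)
      ≤ ∑ j ∈ s with c j ≠ 0, ((c j : ℝ) - (2 - √2) * (c j - 1)) :=
        sum_le_sum fun j _ => sqrt_natCast_le_chord (c j)
    _ = _ := by simp only [sum_sub_distrib, ← mul_sum, sum_const, nsmul_eq_mul, mul_one]

section Rademacher

variable {ι : Type*} [DecidableEq ι]

def rademacher (T : Finset ι) (i : ι) : ℝ := if i ∈ T then 1 else -1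

theorem sum_powerset_sq_sum_mul_rademacher (a : ι → ℝ) (X : Finset ι) :
    ∑ T ∈ X.powerset, (∑ i ∈ X, a i * rademacher T i) ^ 2 = 2 ^ #X * ∑ i ∈ X, a i ^ 2 := by
  induction X using Finset.induction_on with
  | empty => simp
  | insert x X hx ih =>
    have hX : ∀ T ∈ X.powerset, x ∉ T := fun T hT hxT => hx (mem_powerset.mp hT hxT)
    have h_out : ∀ T ∈ X.powerset,
        ∑ i ∈ insert x X, a i * rademacher T i = ∑ i ∈ X, a i * rademacher T i - a x := by
      intro T hT
      rw [sum_insert hx, rademacher, if_neg (hX T hT)]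
      ring
    have h_in : ∀ T : Finset ι, ∑ i ∈ insert x X, a i * rademacher (insert x T) i =
        ∑ i ∈ X, a i * rademacher T i + a x := by
      intro T
      rw [sum_insert hx, add_comm, rademacher, if_pos (mem_insert_self x T), mul_one]
      congr 1
      refine sum_congr rfl fun i hi => ?_
      simp only [rademacher, mem_insert, ne_of_mem_of_not_mem hi hx, false_or]
    rw [sum_powerset_insert hx, ← sum_add_distrib]
    calc _ = ∑ T ∈ X.powerset, ((∑ i ∈ X, a i * rademacher T i - a x) ^ 2 +
          (∑ i ∈ X, a i * rademacher T i + a x) ^ 2) :=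
          sum_congr rfl fun T hT => by rw [h_out T hT, h_in T]
      _ = 2 * ∑ T ∈ X.powerset, (∑ i ∈ X, a i * rademacher T i) ^ 2 +
            2 * ∑ _T ∈ X.powerset, a x ^ 2 := by
          rw [mul_sum, mul_sum, ← sum_add_distrib]
          exact sum_congr rfl fun T _ => by ring
      _ = 2 ^ #(insert x X) * ∑ i ∈ insert x X, a i ^ 2 := by
          rw [ih, sum_const, card_powerset, sum_insert hx, card_insert_of_notMem hx]
          simp only [nsmul_eq_mul, Nat.cast_pow, Nat.cast_ofNat]
          ring

theorem sum_powerset_abs_sum_mul_rademacher_le (a : ι → ℝ) (X : Finset ι) :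
    ∑ T ∈ X.powerset, |∑ i ∈ X, a i * rademacher T i| ≤ 2 ^ #X * √(∑ i ∈ X, a i ^ 2) := by
  have hCS := sq_sum_le_card_mul_sum_sq (s := X.powerset)
    (f := fun T => |∑ i ∈ X, a i * rademacher T i|)
  simp only [sq_abs, sum_powerset_sq_sum_mul_rademacher, card_powerset] at hCS
  rw [← Real.sqrt_sq (by positivity : (0 : ℝ) ≤ 2 ^ #X), ← Real.sqrt_mul (by positivity)]
  exact Real.le_sqrt_of_sq_le (hCS.trans_eq (by push_cast; ring))

theorem exists_sum_abs_sum_mul_rademacher_le {κ : Type*} [Fintype κ] (a : κ → ι → ℝ)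
    (X : Finset ι) :
    ∃ T : Finset ι, ∑ j, |∑ i ∈ X, a j i * rademacher T i| ≤ ∑ j, √(∑ i ∈ X, a j i ^ 2) := by
  obtain ⟨T, -, hT⟩ := exists_le_of_sum_le (s := X.powerset)
    (f := fun T => ∑ j, |∑ i ∈ X, a j i * rademacher T i|)
    (g := fun _ => ∑ j, √(∑ i ∈ X, a j i ^ 2)) X.powerset_nonempty <| by
      rw [sum_comm, sum_const, card_powerset, nsmul_eq_mul, mul_sum]
      push_cast
      exact sum_le_sum fun j _ => sum_powerset_abs_sum_mul_rademacher_le (a j) X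
  exact ⟨T, hT⟩

def signVector (X T : Finset ι) (i : ι) : ℝ := if i ∈ X then rademacher T i else 0

variable (X T : Finset ι)

theorem abs_signVector (i : ι) : |signVector X T i| = if i ∈ X then 1 else 0 := by
  unfold signVector rademacher
  split_ifs <;> norm_num

variable [Fintype ι]

theorem sum_abs_signVector : ∑ i, |signVector X T i| = #X := by
  simp [abs_signVector]

theorem filter_signVector_ne_zero : ({i | signVector X T i ≠ 0} : Finset ι) = X := by
  ext i
  rw [mem_filter, ← abs_ne_zero, abs_signVector]
  simp

theorem mulVec_signVector {κ : Type*} (M : Matrix κ ι ℝ) (j : κ) :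
    M.mulVec (signVector X T) j = ∑ i ∈ X, M j i * rademacher T i := by
  simp [Matrix.mulVec, dotProduct, signVector, mul_ite]

end Rademacher

section RIP

variable {ι κ : Type*} [Fintype ι] [Fintype κ]

def IsRIP1 (M : Matrix κ ι ℝ) (s : ℕ) (δ : ℝ) : Prop :=
  ∀ x : ι → ℝ, #{i | x i ≠ 0} ≤ s →
    ∑ i, |x i| ≤ ∑ j, |M.mulVec x j| ∧ ∑ j, |M.mulVec x j| ≤ (1 + δ) * ∑ i, |x i|

namespace IsRIP1

variable {M : Matrix κ ι ℝ} {s : ℕ} {δ : ℝ}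

theorem sum_abs_col_mem_Icc (hM : IsRIP1 M s δ) (hs : 1 ≤ s) (i : ι) :
    ∑ j, |M j i| ∈ Set.Icc 1 (1 + δ) := by
  have hsupp : #{i' | (Pi.single i 1 : ι → ℝ) i' ≠ 0} ≤ s := by
    rwa [show ({i' | (Pi.single i 1 : ι → ℝ) i' ≠ 0} : Finset ι) = {i} by
      ext; simp [Pi.single_apply], card_singleton]
  have hnorm : ∑ i', |(Pi.single i 1 : ι → ℝ) i'| = 1 := by simp [Pi.single_apply, apply_ite]
  simpa [Matrix.mulVec_single_one, hnorm] using hM _ hsupp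

theorem card_le_sum_sqrt (hM : IsRIP1 M s δ) {X : Finset ι} (hX : #X ≤ s) :
    (#X : ℝ) ≤ ∑ j, √(∑ i ∈ X, M j i ^ 2) := by
  obtain ⟨T, hT⟩ := exists_sum_abs_sum_mul_rademacher_le M X
  have hlow := (hM (signVector X T) (by rwa [filter_signVector_ne_zero])).1
  simp only [sum_abs_signVector, mulVec_signVector] at hlow
  exact hlow.trans hT

end IsRIP1

end RIP

theorem sum_comp_eq_card_filter_eq_one {α : Type*} {f : α → ℝ} {g : ℝ → ℝ} (hg0 : g 0 = 0)
    (hg1 : g 1 = 1) (s : Finset α) (hf : ∀ a ∈ s, f a = 0 ∨ f a = 1) :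
    ∑ a ∈ s, g (f a) = #{a ∈ s | f a = 1} := by
  rw [card_filter, Nat.cast_sum]
  refine sum_congr rfl fun a ha => ?_
  rcases hf a ha with h | h <;> simp [h, hg0, hg1]

section ZeroOne

variable {ι κ : Type*} [Fintype κ] {Φ : Matrix κ ι ℝ}

theorem sum_abs_smul_col (h01 : ∀ j i, Φ j i = 0 ∨ Φ j i = 1) (S : ℝ) (i : ι) :
    ∑ j, |(S • Φ) j i| = |S| * #{j | Φ j i = 1} := by
  simp only [Matrix.smul_apply, smul_eq_mul, abs_mul, ← mul_sum]
  rw [sum_comp_eq_card_filter_eq_one abs_zero abs_one _ fun j _ => h01 j i]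

theorem sum_sqrt_sum_sq_smul (h01 : ∀ j i, Φ j i = 0 ∨ Φ j i = 1) (S : ℝ) (X : Finset ι) :
    ∑ j, √(∑ i ∈ X, (S • Φ) j i ^ 2) = |S| * ∑ j, √(#{i ∈ X | Φ j i = 1} : ℝ) := by
  rw [mul_sum]
  refine sum_congr rfl fun j _ => ?_
  simp only [Matrix.smul_apply, smul_eq_mul, mul_pow, ← mul_sum]
  rw [Real.sqrt_mul (sq_nonneg S), Real.sqrt_sq_eq_abs, sum_comp_eq_card_filter_eq_one
    (f := fun i => Φ j i) (g := (· ^ 2)) (by norm_num) (by norm_num) _ fun i _ => h01 j i]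

theorem sum_card_filter_row_eq {d : ℕ} (hcol : ∀ i, #{j | Φ j i = 1} = d) (X : Finset ι) :
    ∑ j, (#{i ∈ X | Φ j i = 1} : ℝ) = d * #X := by
  have := sum_card_bipartiteAbove_eq_sum_card_bipartiteBelow (fun j i => Φ j i = 1)
    (s := univ) (t := X)
  simp only [bipartiteAbove, bipartiteBelow, hcol, sum_const, smul_eq_mul] at this
  exact_mod_cast (Nat.cast_sum _ _).symm.trans (by rw [this]; push_cast; ring)

theorem sum_sqrt_card_filter_row_le {d : ℕ} (hcol : ∀ i, #{j | Φ j i = 1} = d) (X : Finset ι)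
    {N : Finset κ} (hN : ∀ j, j ∈ N ↔ ∃ i ∈ X, Φ j i = 1) :
    ∑ j, √(#{i ∈ X | Φ j i = 1} : ℝ) ≤ d * #X - (2 - √2) * (d * #X - #N) := by
  have hfilter : ({j | #{i ∈ X | Φ j i = 1} ≠ 0} : Finset κ) = N := by
    ext j
    simp only [mem_filter, mem_univ, true_and, ← Nat.pos_iff_ne_zero, card_pos,
      filter_nonempty_iff, hN]
  simpa only [hfilter, sum_card_filter_row_eq hcol] using sum_sqrt_natCast_le univ
    fun j => #{i ∈ X | Φ j i = 1}

end ZeroOne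

theorem one_sub_mul_le_of_le_mul_sub {t d k r δ c : ℝ} (hc : 0 < c) (ht : 0 ≤ t) (hd : 0 ≤ d)
    (hk : 0 < k) (hδ : 0 < 1 + δ) (htd : t * d ≤ 1 + δ) (h : k ≤ t * (d * k - c * (d * k - r))) :
    (1 - (1 - 1 / (1 + δ)) / c) * d * k ≤ r := by
  have hQ : 0 < d * k - c * (d * k - r) := pos_of_mul_pos_right (hk.trans_le h) ht
  have hdk : d * k ≤ (1 + δ) * (d * k - c * (d * k - r)) :=
    calc d * k ≤ d * (t * (d * k - c * (d * k - r))) := mul_le_mul_of_nonneg_left h hd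
      _ = t * d * (d * k - c * (d * k - r)) := by ring
      _ ≤ _ := mul_le_mul_of_nonneg_right htd hQ.le
  rw [show (1 - (1 - 1 / (1 + δ)) / c) * d * k = d * k - δ * (d * k) / ((1 + δ) * c) by
    field_simp; ring, sub_le_comm, le_div_iff₀ (by positivity)]
  nlinarith

theorem stmt7_general (n m s d : ℕ) (δ S : ℝ)
    (Φ : Matrix (Fin m) (Fin n) ℝ)
    (h01 : ∀ j i, Φ j i = 0 ∨ Φ j i = 1)
    (hcol : ∀ i : Fin n, (Finset.univ.filter fun j : Fin m => Φ j i = 1).card = d)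
    (hRIP : ∀ x : Fin n → ℝ, (Finset.univ.filter fun i => x i ≠ 0).card ≤ s →
      ∑ i, |x i| ≤ ∑ j, |((S • Φ).mulVec x) j| ∧
      ∑ j, |((S • Φ).mulVec x) j| ≤ (1 + δ) * ∑ i, |x i|) :
    ∀ X : Finset (Fin n), X.card ≤ s →
      (1 - (1 - 1 / (1 + δ)) / (2 - Real.sqrt 2)) * d * X.card ≤
        ((Finset.univ.filter fun j : Fin m => ∃ i ∈ X, Φ j i = 1).card : ℝ) := by
  intro X hXs
  rcases X.eq_empty_or_nonempty with rfl | ⟨i₀, hi₀⟩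
  · simp
  have hM : IsRIP1 (S • Φ) s δ := hRIP
  obtain ⟨hcol_lo, hcol_hi⟩ := hM.sum_abs_col_mem_Icc ((card_pos.mpr ⟨i₀, hi₀⟩).trans_le hXs) i₀
  rw [sum_abs_smul_col h01, hcol] at hcol_lo hcol_hi
  have hX := hM.card_le_sum_sqrt hXs
  rw [sum_sqrt_sum_sq_smul h01] at hX
  have hsqrt2 : √2 < 2 := by rw [Real.sqrt_lt' two_pos]; norm_num
  have hsqrt := sum_sqrt_card_filter_row_le hcol X (N := {j | ∃ i ∈ X, Φ j i = 1}) fun j => by simp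
  exact one_sub_mul_le_of_le_mul_sub (sub_pos.mpr hsqrt2) (abs_nonneg S) d.cast_nonneg
    (by exact_mod_cast card_pos.mpr ⟨i₀, hi₀⟩) (by linarith) hcol_hi
    (hX.trans (mul_le_mul_of_nonneg_left hsqrt (abs_nonneg S)))

/-- If `Φ` is an `m×n` 0–1 matrix with exactly `d` ones per column, and for some scaling
`S > 0` the matrix `S·Φ` satisfies RIP(1,s,δ), then `Φ` is the adjacency matrix of an
`(s,ε)`-unbalanced expander with `ε = (1 − 1/(1+δ))/(2−√2)`. -/
theorem stmt7 (n m s d : ℕ) (δ S : ℝ) (hS : 0 < S)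
    (Φ : Matrix (Fin m) (Fin n) ℝ)
    (h01 : ∀ j i, Φ j i = 0 ∨ Φ j i = 1)
    (hcol : ∀ i : Fin n, (Finset.univ.filter fun j : Fin m => Φ j i = 1).card = d)
    (hRIP : ∀ x : Fin n → ℝ, (Finset.univ.filter fun i => x i ≠ 0).card ≤ s →
      ∑ i, |x i| ≤ ∑ j, |((S • Φ).mulVec x) j| ∧
      ∑ j, |((S • Φ).mulVec x) j| ≤ (1 + δ) * ∑ i, |x i|) :
    ∀ X : Finset (Fin n), X.card ≤ s →
      (1 - (1 - 1 / (1 + δ)) / (2 - Real.sqrt 2)) * d * X.card ≤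
        ((Finset.univ.filter fun j : Fin m => ∃ i ∈ X, Φ j i = 1).card : ℝ) :=
  stmt7_general n m s d δ S Φ h01 hcol hRIP
end

section
/- For any vector g ∈ ℝ^n, any 1 < p ≤ 2, and any positive integer t < n, the tail g − g_t (obtained by zeroing out the t largest-magnitude entries of g) satisfies ‖g − g_t‖_p ≤ (1/(p−1))^{1/p} · t^{1/p − 1} · ‖g‖₁. -/
/-!
Every tail entry is dominated by each of the `t` head entries, hence by their average, so it is at
most `‖g‖₁ / t`. Writing `|g i|^p = |g i|^(p-1) · |g i|` on the tail then gives
`‖g − g_t‖_p^p ≤ (‖g‖₁ / t)^(p-1) · ‖g‖₁ = (t^(1/p-1) ‖g‖₁)^p`, and `(1/(p-1))^(1/p) ≥ 1` for `p ≤ 2`.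
-/

open Finset Real

variable {ι : Type*}

lemma le_sum_div_card_of_forall_le {s : Finset ι} {a : ι → ℝ} {x : ℝ} (hs : s.Nonempty)
    (h : ∀ i ∈ s, x ≤ a i) : x ≤ (∑ i ∈ s, a i) / #s := by
  rw [le_div_iff₀ (by exact_mod_cast hs.card_pos), mul_comm, ← nsmul_eq_mul]
  exact card_nsmul_le_sum s a x h

lemma sum_rpow_le_rpow_sub_one_mul_sum {s : Finset ι} {a : ι → ℝ} {M p : ℝ}
    (ha : ∀ i ∈ s, 0 ≤ a i) (hM : ∀ i ∈ s, a i ≤ M) (hp : 1 ≤ p) :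
    ∑ i ∈ s, a i ^ p ≤ M ^ (p - 1) * ∑ i ∈ s, a i := by
  rw [mul_sum]
  refine sum_le_sum fun i hi => ?_
  calc a i ^ p = a i ^ (p - 1) * a i := by
        rw [← rpow_add_one' (ha i hi) (by linarith), sub_add_cancel]
    _ ≤ M ^ (p - 1) * a i :=
        mul_le_mul_of_nonneg_right (rpow_le_rpow (ha i hi) (hM i hi) (by linarith)) (ha i hi)

lemma div_rpow_sub_one_mul_self {S t p : ℝ} (hS : 0 ≤ S) (ht : 0 < t) (hp : 0 < p) :
    (S / t) ^ (p - 1) * S = (t ^ (1 / p - 1) * S) ^ p := by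
  have hexp : (1 / p - 1) * p = -(p - 1) := by field_simp; ring
  rw [mul_rpow (by positivity) hS, ← rpow_mul ht.le, hexp, rpow_neg ht.le, div_rpow hS ht.le,
    div_mul_eq_mul_div, ← rpow_add_one' hS (by linarith), sub_add_cancel, div_eq_inv_mul]

lemma rpow_one_div_sum_compl_rpow_le [Fintype ι] [DecidableEq ι] {g : ι → ℝ} {T : Finset ι}
    (hT : T.Nonempty) (hTmax : ∀ i ∈ T, ∀ j ∉ T, |g j| ≤ |g i|) {p : ℝ} (hp : 1 ≤ p) :
    (∑ i ∈ Tᶜ, |g i| ^ p) ^ (1 / p) ≤ (#T : ℝ) ^ (1 / p - 1) * ∑ i, |g i| := by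
  set S := ∑ i, |g i|
  have hS : 0 ≤ S := by positivity
  have htail : ∀ j ∈ Tᶜ, |g j| ≤ S / #T := fun j hj =>
    (le_sum_div_card_of_forall_le hT fun i hi => hTmax i hi j (mem_compl.mp hj)).trans <|
      div_le_div_of_nonneg_right (sum_le_univ_sum_of_nonneg fun _ => abs_nonneg _) (by positivity)
  rw [one_div, rpow_inv_le_iff_of_pos (by positivity) (by positivity) (by linarith), ← one_div]
  calc ∑ i ∈ Tᶜ, |g i| ^ p ≤ (S / #T) ^ (p - 1) * ∑ i ∈ Tᶜ, |g i| :=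
        sum_rpow_le_rpow_sub_one_mul_sum (fun _ _ => abs_nonneg _) htail hp
    _ ≤ (S / #T) ^ (p - 1) * S := by
        gcongr
        exact sum_le_univ_sum_of_nonneg fun _ => abs_nonneg _
    _ = ((#T : ℝ) ^ (1 / p - 1) * S) ^ p :=
        div_rpow_sub_one_mul_self hS (by exact_mod_cast hT.card_pos) (by linarith)

theorem stmt12_general (n t : ℕ) (ht : 0 < t) (p : ℝ) (hp1 : 1 < p) (hp2 : p ≤ 2)
    (g : Fin n → ℝ) (T : Finset (Fin n)) (hT : T.card = t)
    (hTmax : ∀ i ∈ T, ∀ j ∉ T, |g j| ≤ |g i|) :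
    (∑ i ∈ Tᶜ, |g i| ^ p) ^ (1 / p) ≤
      (1 / (p - 1)) ^ (1 / p) * (t : ℝ) ^ (1 / p - 1) * ∑ i, |g i| := by
  have hfactor : 1 ≤ (1 / (p - 1)) ^ (1 / p) :=
    one_le_rpow (one_le_one_div (by linarith) (by linarith)) (by positivity)
  have hne : T.Nonempty := card_pos.mp (hT ▸ ht)
  calc (∑ i ∈ Tᶜ, |g i| ^ p) ^ (1 / p) ≤ (t : ℝ) ^ (1 / p - 1) * ∑ i, |g i| :=
        hT ▸ rpow_one_div_sum_compl_rpow_le hne hTmax hp1.le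
    _ ≤ (1 / (p - 1)) ^ (1 / p) * (t : ℝ) ^ (1 / p - 1) * ∑ i, |g i| := by
        rw [mul_assoc]
        exact le_mul_of_one_le_left (by positivity) hfactor

/-- Tail bound: for `g ∈ ℝ^n`, `1 < p ≤ 2`, and `0 < t < n`, if `T` is a set of `t`
coordinates carrying the `t` largest-magnitude entries of `g`, then
`‖g − g_T‖_p ≤ (1/(p−1))^{1/p} · t^{1/p−1} · ‖g‖₁`. -/
theorem stmt12 (n t : ℕ) (ht : 0 < t) (htn : t < n) (p : ℝ) (hp1 : 1 < p) (hp2 : p ≤ 2)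
    (g : Fin n → ℝ) (T : Finset (Fin n)) (hT : T.card = t)
    (hTmax : ∀ i ∈ T, ∀ j ∉ T, |g j| ≤ |g i|) :
    (∑ i ∈ Tᶜ, |g i| ^ p) ^ (1 / p) ≤
      (1 / (p - 1)) ^ (1 / p) * (t : ℝ) ^ (1 / p - 1) * ∑ i, |g i| :=
  stmt12_general n t ht p hp1 hp2 g T hT hTmax
end

section
/- Suppose x, x̃ ∈ ℝ^n and 1 < p ≤ 2 satisfy ‖x̃ − x‖_p ≤ ε·k^{1/p−1}·‖x_k − x‖₁. Then the k-term truncation x̃_k of x̃ satisfies ‖x̃_k − x‖₁ ≤ (1 + 2^{2−1/p}ε)·‖x_k − x‖₁ (in particular ‖x̃_k − x‖₁ ≤ (1+3ε)‖x_k − x‖₁ for ε ≥ 0). -/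
/-!
Write `H = K ∪ K'`. The truncation `x̃_k` keeps `K'` where `x_k` keeps `K`. Since `K'` collects
the largest entries of `x̃` and `|K| = |K'|`, the mass of `x` on `K \ K'` that `x̃_k` drops is
paid for by the mass on `K' \ K` that it keeps, up to errors `|x̃ - x|`; this gives
`‖x̃_k - x‖₁ ≤ ‖x_k - x‖₁ + 2 ‖(x̃ - x)|_H‖₁`. Hölder's inequality on the at most `2k` indices
of `H` bounds `‖(x̃ - x)|_H‖₁` by `(2k)^{1-1/p} ‖x̃ - x‖_p ≤ 2^{1-1/p} ε ‖x_k - x‖₁`, and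
`2^{2-1/p} ≤ 2^{3/2} < 3` for `p ≤ 2`.
-/

open Finset

section Exchange

variable {ι M : Type*} [DecidableEq ι] [AddCommMonoid M] [LinearOrder M] [IsOrderedAddMonoid M]

theorem Finset.sum_sdiff_le_sum_sdiff_of_forall_le {s t : Finset ι} {f : ι → M}
    (hcard : #s = #t) (ht : ∀ i ∈ t, ∀ j ∉ t, f j ≤ f i) :
    ∑ i ∈ s \ t, f i ≤ ∑ i ∈ t \ s, f i := by
  have hcard' : #(s \ t) = #(t \ s) := card_sdiff_comm hcard
  rcases (t \ s).eq_empty_or_nonempty with hempty | hne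
  · rw [hempty, card_empty, card_eq_zero] at hcard'
    rw [hempty, hcard']
  obtain ⟨j, hj, hjmin⟩ := (t \ s).exists_min_image f hne
  calc ∑ i ∈ s \ t, f i ≤ #(s \ t) • f j :=
        sum_le_card_nsmul _ _ _ fun i hi => ht j (mem_sdiff.1 hj).1 i (mem_sdiff.1 hi).2
    _ = #(t \ s) • f j := by rw [hcard']
    _ ≤ ∑ i ∈ t \ s, f i := card_nsmul_le_sum _ _ _ hjmin

end Exchange

theorem Real.sum_le_card_rpow_mul_rpow_sum_rpow {ι : Type*} {s : Finset ι} {f : ι → ℝ} {p : ℝ}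
    (hp : 1 ≤ p) (hf : ∀ i ∈ s, 0 ≤ f i) :
    ∑ i ∈ s, f i ≤ (#s : ℝ) ^ (1 - 1 / p) * (∑ i ∈ s, f i ^ p) ^ (1 / p) := by
  have hp0 : 0 < p := by linarith
  have hsum : 0 ≤ ∑ i ∈ s, f i := sum_nonneg hf
  calc ∑ i ∈ s, f i = ((∑ i ∈ s, f i) ^ p) ^ (1 / p) := by
        rw [one_div, Real.rpow_rpow_inv hsum hp0.ne']
    _ ≤ ((#s : ℝ) ^ (p - 1) * ∑ i ∈ s, f i ^ p) ^ (1 / p) :=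
        Real.rpow_le_rpow (Real.rpow_nonneg hsum _)
          (Real.rpow_sum_le_const_mul_sum_rpow_of_nonneg s hp hf) (by positivity)
    _ = (#s : ℝ) ^ (1 - 1 / p) * (∑ i ∈ s, f i ^ p) ^ (1 / p) := by
        rw [Real.mul_rpow (by positivity)
          (sum_nonneg fun i hi => Real.rpow_nonneg (hf i hi) _), ← Real.rpow_mul (by positivity)]
        congr 2
        field_simp

section Truncation

variable {ι : Type*} [Fintype ι] [DecidableEq ι]

theorem sum_abs_ite_mem_sub (t : Finset ι) (x y : ι → ℝ) :
    ∑ i, |(if i ∈ t then y i else 0) - x i| = ∑ i ∈ t, |y i - x i| + ∑ i ∈ tᶜ, |x i| := by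
  rw [← sum_add_sum_compl t]
  congr 1
  · exact sum_congr rfl fun i hi => by rw [if_pos hi]
  · exact sum_congr rfl fun i hi => by rw [if_neg (mem_compl.1 hi), zero_sub, abs_neg]

theorem sum_abs_ite_mem_sub_le {s t : Finset ι} {x y : ι → ℝ} (hcard : #s = #t)
    (ht : ∀ i ∈ t, ∀ j ∉ t, |y j| ≤ |y i|) :
    ∑ i, |(if i ∈ t then y i else 0) - x i| ≤
      ∑ i ∈ sᶜ, |x i| + 2 * ∑ i ∈ s ∪ t, |y i - x i| := by
  have hexchange : ∑ i ∈ s \ t, |y i| ≤ ∑ i ∈ t \ s, |y i| :=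
    sum_sdiff_le_sum_sdiff_of_forall_le hcard ht
  have hx_le : ∀ i, |x i| ≤ |y i| + |y i - x i| := fun i => by
    linarith [abs_sub_abs_le_abs_sub (x i) (y i), abs_sub_comm (x i) (y i)]
  have hy_le : ∀ i, |y i| ≤ |x i| + |y i - x i| := fun i => by
    linarith [abs_sub_abs_le_abs_sub (y i) (x i)]
  have hcompl : ∑ i ∈ tᶜ, |x i| + ∑ i ∈ t \ s, |x i| = ∑ i ∈ sᶜ, |x i| + ∑ i ∈ s \ t, |x i| := by
    have hs_split := sum_inter_add_sum_sdiff s t fun i => |x i|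
    have ht_split := sum_inter_add_sum_sdiff t s fun i => |x i|
    rw [inter_comm] at ht_split
    linarith [sum_compl_add_sum s fun i => |x i|, sum_compl_add_sum t fun i => |x i|]
  have hs : ∑ i ∈ s \ t, |x i| ≤ ∑ i ∈ s \ t, |y i| + ∑ i ∈ s \ t, |y i - x i| := by
    rw [← sum_add_distrib]; exact sum_le_sum fun i _ => hx_le i
  have ht' : ∑ i ∈ t \ s, |y i| ≤ ∑ i ∈ t \ s, |x i| + ∑ i ∈ t \ s, |y i - x i| := by
    rw [← sum_add_distrib]; exact sum_le_sum fun i _ => hy_le i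
  have hunion : ∑ i ∈ s ∪ t, |y i - x i| = ∑ i ∈ t, |y i - x i| + ∑ i ∈ s \ t, |y i - x i| := by
    rw [← sum_union disjoint_sdiff, union_sdiff_self_eq_union, union_comm]
  have hsub : ∑ i ∈ t \ s, |y i - x i| ≤ ∑ i ∈ s ∪ t, |y i - x i| :=
    sum_le_sum_of_subset_of_nonneg (sdiff_subset.trans subset_union_right)
      fun i _ _ => abs_nonneg _
  rw [sum_abs_ite_mem_sub]
  linarith

end Truncation

theorem Real.two_rpow_two_sub_inv_le_three {p : ℝ} (hp0 : 0 < p) (hp2 : p ≤ 2) :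
    (2 : ℝ) ^ (2 - 1 / p) ≤ 3 := by
  have hp : 1 / 2 ≤ 1 / p := one_div_le_one_div_of_le hp0 hp2
  calc (2 : ℝ) ^ (2 - 1 / p) ≤ 2 ^ (2 - 1 / 2 : ℝ) :=
        Real.rpow_le_rpow_of_exponent_le (by norm_num) (by linarith)
    _ = 2 * √2 := by
        rw [show (2 - 1 / 2 : ℝ) = 1 + 1 / 2 by norm_num, Real.rpow_add (by norm_num),
          Real.rpow_one, Real.sqrt_eq_rpow]
    _ ≤ 3 := by linarith [Real.sqrt_two_lt_three_halves]

theorem stmt15_general (n k : ℕ) (hk : 0 < k) (p ε : ℝ) (hp1 : 1 < p) (hp2 : p ≤ 2) (hε : 0 < ε)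
    (x xt : Fin n → ℝ)
    (K K' : Finset (Fin n)) (hK : K.card = k) (hK' : K'.card = k)
    (hK'max : ∀ i ∈ K', ∀ j ∉ K', |xt j| ≤ |xt i|)
    (h : (∑ i, |xt i - x i| ^ p) ^ (1 / p) ≤ ε * (k : ℝ) ^ (1 / p - 1) * ∑ i ∈ Kᶜ, |x i|) :
    ∑ i, |(if i ∈ K' then xt i else 0) - x i| ≤
        (1 + (2 : ℝ) ^ (2 - 1 / p) * ε) * ∑ i ∈ Kᶜ, |x i| ∧
    ∑ i, |(if i ∈ K' then xt i else 0) - x i| ≤ (1 + 3 * ε) * ∑ i ∈ Kᶜ, |x i| := by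
  set σ := ∑ i ∈ Kᶜ, |x i|
  have hk0 : (0 : ℝ) < k := by exact_mod_cast hk
  have hcard : (#(K ∪ K') : ℝ) ≤ 2 * k := by
    exact_mod_cast (card_union_le K K').trans (by omega)
  have hexp : 0 ≤ 1 - 1 / p := sub_nonneg.2 ((div_le_one (by linarith)).2 hp1.le)
  have hLp : (∑ i ∈ K ∪ K', |xt i - x i| ^ p) ^ (1 / p) ≤ ε * (k : ℝ) ^ (1 / p - 1) * σ :=
    (Real.rpow_le_rpow (by positivity) (sum_le_sum_of_subset_of_nonneg (subset_univ _)
      fun _ _ _ => by positivity) (by positivity)).trans h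
  have herr : ∑ i ∈ K ∪ K', |xt i - x i| ≤ 2 ^ (1 - 1 / p) * ε * σ := calc
    _ ≤ (#(K ∪ K') : ℝ) ^ (1 - 1 / p) * (∑ i ∈ K ∪ K', |xt i - x i| ^ p) ^ (1 / p) :=
        Real.sum_le_card_rpow_mul_rpow_sum_rpow hp1.le fun _ _ => abs_nonneg _
    _ ≤ (2 * k) ^ (1 - 1 / p) * (ε * (k : ℝ) ^ (1 / p - 1) * σ) := by gcongr
    _ = 2 ^ (1 - 1 / p) * ε * σ * ((k : ℝ) ^ (1 - 1 / p) * (k : ℝ) ^ (1 / p - 1)) := by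
        rw [Real.mul_rpow zero_le_two hk0.le]; ring
    _ = 2 ^ (1 - 1 / p) * ε * σ := by rw [← Real.rpow_add hk0]; norm_num
  have hfirst : ∑ i, |(if i ∈ K' then xt i else 0) - x i| ≤ (1 + 2 ^ (2 - 1 / p) * ε) * σ := calc
    _ ≤ σ + 2 * ∑ i ∈ K ∪ K', |xt i - x i| :=
        sum_abs_ite_mem_sub_le (hK.trans hK'.symm) hK'max
    _ ≤ σ + 2 * (2 ^ (1 - 1 / p) * ε * σ) := by gcongr
    _ = (1 + 2 ^ (2 - 1 / p) * ε) * σ := by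
        rw [show (2 : ℝ) - 1 / p = 1 + (1 - 1 / p) by ring, Real.rpow_add two_pos, Real.rpow_one]
        ring
  refine ⟨hfirst, hfirst.trans ?_⟩
  gcongr
  exact Real.two_rpow_two_sub_inv_le_three (by linarith) hp2

/-- If `‖x̃ − x‖_p ≤ ε·k^{1/p−1}·‖x_k − x‖₁`, then the `k`-term truncation `x̃_k` of `x̃`
satisfies `‖x̃_k − x‖₁ ≤ (1 + 2^{2−1/p}ε)·‖x_k − x‖₁`, and in particular
`‖x̃_k − x‖₁ ≤ (1+3ε)·‖x_k − x‖₁`. Here `K` (resp. `K'`) is the set of the `k`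
largest-magnitude coordinates of `x` (resp. `x̃`), so `‖x_k − x‖₁ = ∑_{i ∉ K} |x i|`. -/
theorem stmt15 (n k : ℕ) (hk : 0 < k) (p ε : ℝ) (hp1 : 1 < p) (hp2 : p ≤ 2) (hε : 0 < ε)
    (x xt : Fin n → ℝ)
    (K K' : Finset (Fin n)) (hK : K.card = k) (hK' : K'.card = k)
    (hKmax : ∀ i ∈ K, ∀ j ∉ K, |x j| ≤ |x i|)
    (hK'max : ∀ i ∈ K', ∀ j ∉ K', |xt j| ≤ |xt i|)
    (h : (∑ i, |xt i - x i| ^ p) ^ (1 / p) ≤ ε * (k : ℝ) ^ (1 / p - 1) * ∑ i ∈ Kᶜ, |x i|) :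
    ∑ i, |(if i ∈ K' then xt i else 0) - x i| ≤
        (1 + (2 : ℝ) ^ (2 - 1 / p) * ε) * ∑ i ∈ Kᶜ, |x i| ∧
    ∑ i, |(if i ∈ K' then xt i else 0) - x i| ≤ (1 + 3 * ε) * ∑ i ∈ Kᶜ, |x i| :=
  stmt15_general n k hk p ε hp1 hp2 hε x xt K K' hK hK' hK'max h
end

section
/- Suppose an m×n matrix Φ satisfies RIP(p,K,δ), i.e., ‖y‖_p ≤ ‖Φy‖_p ≤ (1+δ)‖y‖_p for all K-sparse y. Then for every x ∈ ℝ^n, ‖Φx‖_p ≤ (1+δ)·(‖x‖_p + K^{1/p−1}·‖x‖₁). -/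
/-!
Sort the coordinates of `x` by decreasing magnitude and cut them into consecutive blocks of `K`.
Each block is `K`-sparse, so RIP and Minkowski bound `‖Φx‖_p` by `(1+δ)` times the sum of the
`ℓ_p` norms of the blocks. The first block is dominated by `‖x‖_p`. Every entry of block `j+1` is
at most the average `S_j / K` of the magnitudes in block `j`, so its `ℓ_p` norm is at most
`K^{1/p} · S_j / K = K^{1/p-1} S_j`, and the `S_j` add up to at most `‖x‖₁`.
-/

open Finset

noncomputable def pNorm {ι : Type*} [Fintype ι] (p : ℝ) (v : ι → ℝ) : ℝ :=
  (∑ i, |v i| ^ p) ^ (1 / p)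

section pNorm

variable {ι κ : Type*} [Fintype ι] {p : ℝ}

lemma pNorm_zero (hp : p ≠ 0) : pNorm p (0 : ι → ℝ) = 0 := by
  simp [pNorm, Real.zero_rpow hp, Real.zero_rpow (inv_ne_zero hp)]

lemma pNorm_sum_le (hp : 1 ≤ p) (s : Finset κ) (v : κ → ι → ℝ) :
    pNorm p (∑ j ∈ s, v j) ≤ ∑ j ∈ s, pNorm p (v j) :=
  le_sum_of_subadditive _ (pNorm_zero (by positivity)).le
    (fun v w => Real.Lp_add_le univ v w hp) s v

lemma pNorm_mono (hp : 0 < p) {v w : ι → ℝ} (h : ∀ i, |v i| ≤ |w i|) : pNorm p v ≤ pNorm p w :=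
  Real.rpow_le_rpow (by positivity)
    (sum_le_sum fun i _ => Real.rpow_le_rpow (abs_nonneg _) (h i) hp.le) (by positivity)

lemma pNorm_indicator_le (hp : 0 < p) (s : Finset ι) {v : ι → ℝ} {c : ℝ}
    (hc : ∀ i ∈ s, |v i| ≤ c) (hc0 : 0 ≤ c) :
    pNorm p ((s : Set ι).indicator v) ≤ (#s : ℝ) ^ (1 / p) * c := by
  have hsum : ∑ i, |(s : Set ι).indicator v i| ^ p ≤ #s * c ^ p := by
    rw [sum_indicator_subset_of_eq_zero v (fun _ a => |a| ^ p) (subset_univ s)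
      (fun _ => by simp [Real.zero_rpow hp.ne'])]
    calc ∑ i ∈ s, |v i| ^ p ≤ ∑ _i ∈ s, c ^ p := by
          gcongr with i hi
          exact hc i hi
      _ = #s * c ^ p := by rw [sum_const, nsmul_eq_mul]
  calc pNorm p ((s : Set ι).indicator v) ≤ (#s * c ^ p) ^ (1 / p) := by
        unfold pNorm; gcongr
    _ = (#s : ℝ) ^ (1 / p) * c := by
        rw [Real.mul_rpow (by positivity) (by positivity), ← Real.rpow_mul hc0,
          mul_one_div_cancel hp.ne', Real.rpow_one]

end pNorm

/-- `g i` is the index of the block containing `i`; this is the tail bound `|x(i)| ≤ ‖x‖₁ / i`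
applied block by block. -/
def IsSortedBlocking {ι : Type*} [Fintype ι] (K : ℕ) (x : ι → ℝ) (g : ι → ℕ) : Prop :=
  (∀ j, #{i | g i = j} ≤ K) ∧ ∀ j t, g t = j + 1 → K * |x t| ≤ ∑ s with g s = j, |x s|

lemma IsSortedBlocking.comp_equiv {ι κ : Type*} [Fintype ι] [Fintype κ] {K : ℕ} {x : ι → ℝ}
    {g : ι → ℕ} (h : IsSortedBlocking K x g) (e : κ ≃ ι) : IsSortedBlocking K (x ∘ e) (g ∘ e) := by
  refine ⟨fun j => ?_, fun j t ht => ?_⟩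
  · rw [card_equiv e (t := {i | g i = j}) (by simp)]
    exact h.1 j
  · rw [sum_filter, ← Equiv.sum_comp e.symm]
    simpa [sum_filter] using h.2 j (e t) ht

section Fin

variable {n K : ℕ}

lemma card_filter_div_eq_le (hK : 0 < K) (j : ℕ) : #{t : Fin n | (t : ℕ) / K = j} ≤ K := by
  calc #{t : Fin n | (t : ℕ) / K = j} ≤ #(Ico (j * K) (j * K + K)) := by
        refine card_le_card_of_injOn Fin.val (fun t ht => ?_) Fin.val_injective.injOn
        simp only [coe_filter, Set.mem_ofPred_eq, mem_univ, true_and, Nat.div_eq_iff hK] at ht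
        simp only [coe_Ico, Set.mem_Ico]
        omega
    _ = K := by simp

lemma le_card_filter_div_eq (hK : 0 < K) {j : ℕ} (t : Fin n) (ht : (t : ℕ) / K = j + 1) :
    K ≤ #{s : Fin n | (s : ℕ) / K = j} := by
  calc K = #(Ico (j * K) (j * K + K)) := by simp
    _ ≤ #{s : Fin n | (s : ℕ) / K = j} := by
        refine card_le_card_of_surjOn Fin.val (fun v hv => ?_)
        rw [Nat.div_eq_iff hK, add_mul, one_mul] at ht
        simp only [coe_Ico, Set.mem_Ico] at hv
        refine ⟨⟨v, by omega⟩, ?_, rfl⟩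
        simp only [coe_filter, Set.mem_ofPred_eq, mem_univ, true_and, Nat.div_eq_iff hK]
        omega

lemma isSortedBlocking_div_of_antitone (hK : 0 < K) {x : Fin n → ℝ}
    (hx : Antitone fun t => |x t|) :
    IsSortedBlocking K x fun t => (t : ℕ) / K := by
  refine ⟨card_filter_div_eq_le hK, fun j t ht => ?_⟩
  dsimp only at ht ⊢
  have hdom : ∀ s ∈ ({s : Fin n | (s : ℕ) / K = j} : Finset _), |x t| ≤ |x s| := by
    intro s hs
    simp only [mem_filter, mem_univ, true_and] at hs
    refine hx (Fin.le_def.mpr ?_)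
    rw [Nat.div_eq_iff hK, add_mul, one_mul] at ht
    rw [Nat.div_eq_iff hK] at hs
    omega
  calc (K : ℝ) * |x t| ≤ #{s : Fin n | (s : ℕ) / K = j} * |x t| := by
        gcongr; exact le_card_filter_div_eq hK t ht
    _ ≤ _ := by rw [← nsmul_eq_mul]; exact card_nsmul_le_sum _ _ _ hdom

lemma exists_isSortedBlocking (hK : 0 < K) (x : Fin n → ℝ) :
    ∃ g : Fin n → ℕ, (∀ i, g i ≤ n) ∧ IsSortedBlocking K x g := by
  set σ := Tuple.sort fun i => -|x i|
  have hσ : Antitone fun t => |(x ∘ σ) t| := fun s t hst => by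
    simpa using Tuple.monotone_sort (fun i => -|x i|) hst
  refine ⟨fun i => (σ.symm i : ℕ) / K, fun i => (Nat.div_le_self _ _).trans (σ.symm i).is_lt.le, ?_⟩
  simpa [Function.comp_def] using (isSortedBlocking_div_of_antitone hK hσ).comp_equiv σ.symm

end Fin

section Blocks

variable {ι : Type*} [Fintype ι]

noncomputable def blockPart (g : ι → ℕ) (x : ι → ℝ) (j : ℕ) : ι → ℝ :=
  (({i | g i = j} : Finset ι) : Set ι).indicator x

lemma sum_blockPart {g : ι → ℕ} {N : ℕ} (hgN : ∀ i, g i ≤ N) (x : ι → ℝ) :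
    ∑ j ∈ range (N + 1), blockPart g x j = x := by
  ext i
  simp [blockPart, Finset.sum_apply, Set.indicator_apply, Nat.lt_succ_of_le (hgN i)]

lemma card_support_blockPart_le (g : ι → ℕ) (x : ι → ℝ) (j : ℕ) :
    #{i | blockPart g x j i ≠ 0} ≤ #{i | g i = j} :=
  card_le_card <| monotone_filter_right _ fun _ _ hi =>
    by_contra fun h => hi (by simp [blockPart, h])

lemma IsSortedBlocking.sum_pNorm_blockPart_le {K N : ℕ} (hK : 0 < K) {p : ℝ} (hp : 0 < p)
    {x : ι → ℝ} {g : ι → ℕ} (hg : IsSortedBlocking K x g) (hgN : ∀ i, g i ≤ N) :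
    ∑ j ∈ range (N + 1), pNorm p (blockPart g x j) ≤
      pNorm p x + (K : ℝ) ^ (1 / p - 1) * ∑ i, |x i| := by
  have hK' : (0 : ℝ) < K := by exact_mod_cast hK
  have hhead : pNorm p (blockPart g x 0) ≤ pNorm p x :=
    pNorm_mono hp fun _ => norm_indicator_le_norm_self x _
  have htail : ∀ j, pNorm p (blockPart g x (j + 1)) ≤
      (K : ℝ) ^ (1 / p - 1) * ∑ s with g s = j, |x s| := by
    intro j
    set S := ∑ s with g s = j, |x s|
    calc pNorm p (blockPart g x (j + 1)) ≤ (#{i | g i = j + 1} : ℝ) ^ (1 / p) * (S / K) :=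
          pNorm_indicator_le hp _ (fun t ht => (le_div_iff₀' hK').mpr
            (hg.2 j t (mem_filter.mp ht).2)) (by positivity)
      _ ≤ (K : ℝ) ^ (1 / p) * (S / K) := by gcongr; exact_mod_cast hg.1 (j + 1)
      _ = (K : ℝ) ^ (1 / p - 1) * S := by
          rw [Real.rpow_sub hK', Real.rpow_one]; ring
  have hl1 : ∑ j ∈ range N, ∑ s with g s = j, |x s| ≤ ∑ i, |x i| :=
    calc _ ≤ ∑ j ∈ range (N + 1), ∑ s with g s = j, |x s| :=
          sum_le_sum_of_subset_of_nonneg (range_subset_range.2 N.le_succ)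
            fun _ _ _ => sum_nonneg fun _ _ => abs_nonneg _
      _ = ∑ i, |x i| :=
          sum_fiberwise_of_maps_to (fun i _ => mem_range.2 (Nat.lt_succ_of_le (hgN i))) _
  calc ∑ j ∈ range (N + 1), pNorm p (blockPart g x j)
      ≤ ∑ j ∈ range N, (K : ℝ) ^ (1 / p - 1) * ∑ s with g s = j, |x s| + pNorm p x := by
        rw [sum_range_succ']
        exact add_le_add (sum_le_sum fun j _ => htail j) hhead
    _ ≤ pNorm p x + (K : ℝ) ^ (1 / p - 1) * ∑ i, |x i| := by
        rw [← mul_sum, add_comm]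
        gcongr

end Blocks

theorem stmt17_general (n m K : ℕ) (hK : 0 < K) (p δ : ℝ) (hp1 : 1 < p) (hδ : 0 ≤ δ)
    (Φ : Matrix (Fin m) (Fin n) ℝ)
    (hRIP : ∀ y : Fin n → ℝ, (Finset.univ.filter fun i => y i ≠ 0).card ≤ K →
      (∑ i, |y i| ^ p) ^ (1 / p) ≤ (∑ j, |Φ.mulVec y j| ^ p) ^ (1 / p) ∧
      (∑ j, |Φ.mulVec y j| ^ p) ^ (1 / p) ≤ (1 + δ) * (∑ i, |y i| ^ p) ^ (1 / p)) :
    ∀ x : Fin n → ℝ,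
      (∑ j, |Φ.mulVec x j| ^ p) ^ (1 / p) ≤
        (1 + δ) * ((∑ i, |x i| ^ p) ^ (1 / p) + (K : ℝ) ^ (1 / p - 1) * ∑ i, |x i|) := by
  intro x
  obtain ⟨g, hgn, hg⟩ := exists_isSortedBlocking hK x
  have hsparse : ∀ j, #{i | blockPart g x j i ≠ 0} ≤ K := fun j =>
    (card_support_blockPart_le g x j).trans (hg.1 j)
  calc pNorm p (Φ.mulVec x) = pNorm p (∑ j ∈ range (n + 1), Φ.mulVec (blockPart g x j)) := by
        rw [← Matrix.mulVec_sum, sum_blockPart hgn]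
    _ ≤ ∑ j ∈ range (n + 1), pNorm p (Φ.mulVec (blockPart g x j)) := pNorm_sum_le hp1.le _ _
    _ ≤ ∑ j ∈ range (n + 1), (1 + δ) * pNorm p (blockPart g x j) :=
        sum_le_sum fun j _ => (hRIP _ (hsparse j)).2
    _ = (1 + δ) * ∑ j ∈ range (n + 1), pNorm p (blockPart g x j) := (mul_sum ..).symm
    _ ≤ (1 + δ) * (pNorm p x + (K : ℝ) ^ (1 / p - 1) * ∑ i, |x i|) := by
        gcongr
        exact hg.sum_pNorm_blockPart_le hK (by linarith) hgn

/-- If an `m×n` matrix `Φ` satisfies RIP(p,K,δ), then for every `x ∈ ℝ^n`,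
`‖Φx‖_p ≤ (1+δ)·(‖x‖_p + K^{1/p−1}·‖x‖₁)`. -/
theorem stmt17 (n m K : ℕ) (hK : 0 < K) (p δ : ℝ) (hp1 : 1 < p) (hp2 : p ≤ 2) (hδ : 0 ≤ δ)
    (Φ : Matrix (Fin m) (Fin n) ℝ)
    (hRIP : ∀ y : Fin n → ℝ, (Finset.univ.filter fun i => y i ≠ 0).card ≤ K →
      (∑ i, |y i| ^ p) ^ (1 / p) ≤ (∑ j, |Φ.mulVec y j| ^ p) ^ (1 / p) ∧
      (∑ j, |Φ.mulVec y j| ^ p) ^ (1 / p) ≤ (1 + δ) * (∑ i, |y i| ^ p) ^ (1 / p)) :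
    ∀ x : Fin n → ℝ,
      (∑ j, |Φ.mulVec x j| ^ p) ^ (1 / p) ≤
        (1 + δ) * ((∑ i, |x i| ^ p) ^ (1 / p) + (K : ℝ) ^ (1 / p - 1) * ∑ i, |x i|) :=
  stmt17_general n m K hK p δ hp1 hδ Φ hRIP
end
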